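/- Let ⟨Z_n,{a,b}⟩ be a standardized DFA with the subgroup sequence H₀ = {0}, H_k = ⟨D_k⟩ where D_k = {p ∈ dupl(w) | 0 ∈ excl(w) ⊆ H_{k−1}, |excl(w)| ≤ k}. If H_ℓ = H_{ℓ+1} for some ℓ, then the subgroup H_ℓ is a-invariant (H_ℓ·a ⊆ H_ℓ). -/

import Mathlib

/-- Action of a letter: `true` is `b : q ↦ q+1`, `false` is `a`. -/
def act {n : ℕ} (a : ZMod n → ZMod n) (q : ZMod n) (c : Bool) : ZMod n :=
  if c then q + 1 else a q

/-- Action of a word on a state. -/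
def wact {n : ℕ} (a : ZMod n → ZMod n) (w : List Bool) (q : ZMod n) : ZMod n :=
  w.foldl (act a) q

/-- Excluded set of a word. -/
def excl {n : ℕ} (a : ZMod n → ZMod n) (w : List Bool) : Set (ZMod n) :=
  {q | ∀ p, wact a w p ≠ q}

/-- Duplicate set of a word. -/
def dupl {n : ℕ} (a : ZMod n → ZMod n) (w : List Bool) : Set (ZMod n) :=
  {p | ∃ q₁ q₂, q₁ ≠ q₂ ∧ wact a w q₁ = p ∧ wact a w q₂ = p}

/-- Complete reachability for a standardized binary DFA on `ZMod n`. -/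
def CompletelyReachable {n : ℕ} (a : ZMod n → ZMod n) : Prop :=
  ∀ S : Set (ZMod n), S.Nonempty → ∃ w : List Bool, Set.range (wact a w) = S

/-- Standardized DFA: `a` has defect 1 with excluded state `0`, and `0·a = dupl(a)`,
i.e. `a 0` has a second preimage `r ≠ 0`. -/
def Standardized {n : ℕ} (a : ZMod n → ZMod n) : Prop :=
  Set.range a = {(0 : ZMod n)}ᶜ ∧ ∃ r : ZMod n, r ≠ 0 ∧ a r = a 0

/-- Edge of the Rystsov graph: for some word of defect 1, `q` is the excluded state
and `p` the duplicate state. -/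
def RysEdge {n : ℕ} (a : ZMod n → ZMod n) (q p : ZMod n) : Prop :=
  ∃ w : List Bool, excl a w = {q} ∧ dupl a w = {p}

/-- The difference set `D₁`. -/
def D1 {n : ℕ} (a : ZMod n → ZMod n) : Set (ZMod n) :=
  {p | RysEdge a 0 p}

/-- The set `D_k` built from a subgroup `H = H_{k-1}`. -/
def Dnext {n : ℕ} (a : ZMod n → ZMod n) (H : AddSubgroup (ZMod n)) (k : ℕ) : Set (ZMod n) :=
  {p | ∃ w : List Bool, p ∈ dupl a w ∧ (0 : ZMod n) ∈ excl a w ∧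
    excl a w ⊆ (H : Set (ZMod n)) ∧ (excl a w).ncard ≤ k}

/-- The subgroup sequence `H_k`. -/
def Hk {n : ℕ} (a : ZMod n → ZMod n) : ℕ → AddSubgroup (ZMod n)
  | 0 => ⊥
  | k + 1 => AddSubgroup.closure (Dnext a (Hk a k) (k + 1))

/-!
Stability says `Dₗ₊₁ ⊆ H := Hₗ`. For every word `w` with `d ∈ dupl(w)` and `|excl(w)| ≤ ℓ`,
the word `w bˣ a` has duplicate `(d + x)·a` and excluded set inside `{0} ∪ (excl(w) + x)·a`. Hence
`(d + x)·a ∈ H` as soon as `(e + x)·a ∈ H` for all `e ∈ excl(w)`. By induction on `k ≤ ℓ`,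
every element of `Hₖ` therefore stabilises `{y | y·a ∈ H}` under translation. Since
`0·a ∈ H` (take the word `a`, whose duplicate is `0·a`), translating `0` by `h ∈ H` gives
`h·a ∈ H`.
-/

section

open scoped Pointwise

variable {n : ℕ} (a : ZMod n → ZMod n)

theorem wact_append (v w : List Bool) (q : ZMod n) :
    wact a (v ++ w) q = wact a w (wact a v q) :=
  List.foldl_append

theorem wact_replicate_true (m : ℕ) (q : ZMod n) :
    wact a (List.replicate m true) q = q + m := by
  induction m generalizing q with
  | zero => simp [wact]
  | succ m ih =>
    rw [List.replicate_succ, ← List.singleton_append, wact_append, ih]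
    simp [wact, act, add_assoc, add_comm (1 : ZMod n)]

theorem wact_mem_dupl_append {v : List Bool} {d : ZMod n} (hd : d ∈ dupl a v) (w : List Bool) :
    wact a w d ∈ dupl a (v ++ w) := by
  obtain ⟨q₁, q₂, hne, h₁, h₂⟩ := hd
  exact ⟨q₁, q₂, hne, by rw [wact_append, h₁], by rw [wact_append, h₂]⟩

theorem excl_append_replicate_true_subset (w : List Bool) (m : ℕ) :
    excl a (w ++ List.replicate m true) ⊆ (· + (m : ZMod n)) '' excl a w := by
  intro q hq
  refine ⟨q - m, fun p hp => hq p ?_, sub_add_cancel q _⟩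
  rw [wact_append, wact_replicate_true, hp, sub_add_cancel]

theorem excl_append_false_subset (ha : {0}ᶜ ⊆ Set.range a) (w : List Bool) :
    excl a (w ++ [false]) ⊆ insert 0 (a '' excl a w) := by
  intro q hq
  by_cases hq0 : q = 0
  · exact Or.inl hq0
  obtain ⟨p, rfl⟩ := ha hq0
  exact Or.inr ⟨p, fun z hz => hq z (by rw [wact_append, hz]; rfl), rfl⟩

theorem zero_mem_excl_append_false (ha : Set.range a ⊆ {0}ᶜ) (w : List Bool) :
    0 ∈ excl a (w ++ [false]) := fun p hp =>
  ha ⟨wact a w p, by rw [wact_append] at hp; exact hp⟩ rfl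

theorem apply_zero_mem_of_dnext_subset (hstd : Standardized a) {H : AddSubgroup (ZMod n)}
    {ℓ : ℕ} (hD : Dnext a H (ℓ + 1) ⊆ H) : a 0 ∈ H := by
  obtain ⟨hrange, r, hr0, hra⟩ := hstd
  have hexcl : excl a [false] ⊆ {0} := by
    simpa [excl, wact] using excl_append_false_subset a hrange.ge []
  refine hD ⟨[false], ⟨r, 0, hr0, hra, rfl⟩, zero_mem_excl_append_false a hrange.le [],
    hexcl.trans (Set.singleton_subset_iff.2 H.zero_mem), ?_⟩
  calc (excl a [false]).ncard ≤ ({0} : Set (ZMod n)).ncard :=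
        Set.ncard_le_ncard hexcl (Set.finite_singleton 0)
    _ ≤ ℓ + 1 := by simp

theorem apply_add_mem_of_mem_dupl [NeZero n] (hstd : Standardized a) {H : AddSubgroup (ZMod n)}
    {ℓ : ℕ} (hD : Dnext a H (ℓ + 1) ⊆ H) {w : List Bool} (hw : (excl a w).ncard ≤ ℓ)
    {d : ZMod n} (hd : d ∈ dupl a w) {x : ZMod n} (hx : ∀ e ∈ excl a w, a (e + x) ∈ H) :
    a (d + x) ∈ H := by
  set u := w ++ List.replicate x.val true ++ [false]
  have hexcl : excl a u ⊆ insert 0 ((fun e => a (e + x)) '' excl a w) := by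
    refine (excl_append_false_subset a hstd.1.ge _).trans (Set.insert_subset_insert ?_)
    have := Set.image_mono (f := a) (excl_append_replicate_true_subset a w x.val)
    rwa [Set.image_image, ZMod.natCast_zmod_val] at this
  refine hD ⟨u, ?_, zero_mem_excl_append_false a hstd.1.le _,
    hexcl.trans (Set.insert_subset H.zero_mem (Set.image_subset_iff.2 hx)), ?_⟩
  · have := wact_mem_dupl_append a hd (List.replicate x.val true ++ [false])
    rwa [← List.append_assoc, wact_append, wact_replicate_true, ZMod.natCast_zmod_val] at this
  · calc (excl a u).ncard ≤ (insert 0 ((fun e => a (e + x)) '' excl a w)).ncard :=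
          Set.ncard_le_ncard hexcl (Set.toFinite _)
      _ ≤ ((fun e => a (e + x)) '' excl a w).ncard + 1 := Set.ncard_insert_le _ _
      _ ≤ (excl a w).ncard + 1 :=
        Nat.add_le_add_right (Set.ncard_image_le (Set.toFinite _)) 1
      _ ≤ ℓ + 1 := by omega

theorem mem_stabilizer_preimage_iff [NeZero n] {H : AddSubgroup (ZMod n)} {g : ZMod n} :
    g ∈ AddAction.stabilizer (ZMod n) (a ⁻¹' H) ↔ ∀ y, a y ∈ H → a (g + y) ∈ H :=
  AddAction.mem_stabilizer_set' (Set.toFinite _)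

theorem Hk_le_stabilizer [NeZero n] (hstd : Standardized a) {H : AddSubgroup (ZMod n)}
    {ℓ : ℕ} (hD : Dnext a H (ℓ + 1) ⊆ H) :
    ∀ k ≤ ℓ, Hk a k ≤ AddAction.stabilizer (ZMod n) (a ⁻¹' H)
  | 0, _ => bot_le
  | k + 1, hk => by
    refine (AddSubgroup.closure_le _).2 fun d ⟨w, hd, _, hsub, hcard⟩ =>
      (mem_stabilizer_preimage_iff a).2 fun y hy => ?_
    have hstab := Hk_le_stabilizer hstd hD k (by omega)
    exact apply_add_mem_of_mem_dupl a hstd hD (by omega) hd fun e he =>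
      (mem_stabilizer_preimage_iff a).1 (hstab (hsub he)) y hy

theorem apply_mem_of_dnext_subset [NeZero n] (hstd : Standardized a)
    {H : AddSubgroup (ZMod n)} {ℓ : ℕ} (hD : Dnext a H (ℓ + 1) ⊆ H) {h : ZMod n}
    (hh : h ∈ Hk a ℓ) : a h ∈ H := by
  simpa using (mem_stabilizer_preimage_iff a).1 (Hk_le_stabilizer a hstd hD ℓ le_rfl hh) 0
    (apply_zero_mem_of_dnext_subset a hstd hD)

end

theorem Hk_invariant_of_stable {n : ℕ} (hn : 2 ≤ n) (a : ZMod n → ZMod n)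
    (hstd : Standardized a) (ℓ : ℕ) (hℓ : Hk a ℓ = Hk a (ℓ + 1)) :
    ∀ h ∈ Hk a ℓ, a h ∈ Hk a ℓ := by
  have : NeZero n := ⟨by omega⟩
  have hD : Dnext a (Hk a ℓ) (ℓ + 1) ⊆ Hk a ℓ := fun p hp => by
    rw [hℓ]
    exact AddSubgroup.subset_closure hp
  exact fun h hh => apply_mem_of_dnext_subset a hstd hD hh
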